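/- arXiv:2109.12729 — 12 statements merged into one kernel-verified Lean document; each statement's English description precedes it below -/
import Mathlib

section
/- In any group formation game where all members of a group share the same group utility, if a subset S of a group G_k deviates to join group G_{k'} such that the utility of G_{k'} ∪ S strictly exceeds the utility of G_k, and the utility of G_{k'} ∪ S is at least the utility of G_{k'}, then the resulting state is strictly higher in the lexicographic order of sorted agent-utility vectors (utilities sorted in non-increasing order). -/
/-!
Compare, value by value, how many agents receive each utility before and after the deviation.
Only the groups `Gk` and `Gk'` are destroyed, and both have utility at most
`v = U (Gk' ∪ S)` (strictly below `v` for `Gk`), so every value above `v` keeps at least its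
multiplicity, while `v` gains the `|S|` deviators. For a non-increasingly sorted vector, dominating
another in this sense is enough to be lexicographically larger.
-/

/-- `P` is a partition of the agents `Fin n` into (nonempty) groups. -/
def IsGroupPartition {n : ℕ} (P : Finset (Finset (Fin n))) : Prop :=
  (∀ G ∈ P, G.Nonempty) ∧ ∀ i : Fin n, ∃! G, G ∈ P ∧ i ∈ G

/-- The vector (list) of agents' utilities, sorted in non-increasing order;
each agent's utility equals the utility of her group. -/
noncomputable def Psi {n : ℕ} (U : Finset (Fin n) → ℝ)
    (P : Finset (Finset (Fin n))) : List ℝ :=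
  ((P.val.bind fun G => Multiset.replicate G.card (U G)).sort (· ≤ ·)).reverse

theorem List.lex_lt_of_count_lt {α : Type*} [LinearOrder α] :
    ∀ {L L' : List α}, L'.Pairwise (· ≥ ·) → ∀ {v : α}, L.count v < L'.count v →
      (∀ x, v < x → L.count x ≤ L'.count x) → List.Lex (· < ·) L L'
  | [], _ :: _, _, _, _, _ => .nil
  | _, [], _, _, hv, _ => by simp at hv
  | x :: L, y :: L', hsorted, v, hv, habove => by
    rcases lt_trichotomy x y with hxy | rfl | hyx
    · exact .rel hxy
    · refine .cons (lex_lt_of_count_lt hsorted.of_cons (v := v) ?_ fun z hz => ?_)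
      · simpa [List.count_cons] using hv
      · simpa [List.count_cons] using habove z hz
    · have hcount : ∀ z, y < z → (y :: L').count z = 0 := fun z hz =>
        List.count_eq_zero.mpr fun hmem => by
          rcases List.mem_cons.mp hmem with rfl | hmem
          · exact hz.false
          · exact (List.rel_of_pairwise_cons hsorted hmem).not_gt hz
      have hxv : x ≤ v := by
        by_contra! hvx
        have := habove x hvx
        simp [hcount x hyx] at this
      simp [hcount v (hyx.trans_le hxv)] at hv

namespace Finset

variable {ι M : Type*} [DecidableEq ι] [AddCommMonoid M] {f : ι → M}

theorem sum_erase_erase_add_add {P : Finset ι} {a b z : ι} (hz : f z = 0) (ha : a ∈ P)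
    (hb : b = z ∨ (b ∈ P ∧ b ≠ a)) :
    ∑ G ∈ (P.erase a).erase b, f G + (f a + f b) = ∑ G ∈ P, f G := by
  rw [← add_assoc, ← sum_erase_add P f ha]
  rcases hb with rfl | ⟨hbP, hba⟩
  · rw [sum_erase _ hz, hz, add_zero]
  · rw [add_right_comm, sum_erase_add _ f (mem_erase.mpr ⟨hba, hbP⟩)]

theorem sum_erase_union_pair {Q : Finset ι} {c d z : ι} (hz : f z = 0) (hcd : c ≠ d)
    (hc : c ∉ Q) (hd : d ∉ Q) :
    ∑ G ∈ (Q ∪ {c, d}).erase z, f G = ∑ G ∈ Q, f G + (f c + f d) := by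
  rw [sum_erase _ hz, sum_union, sum_pair hcd]
  simp [disjoint_right, hc, hd]

end Finset

namespace IsGroupPartition

variable {n : ℕ} {P : Finset (Finset (Fin n))}

theorem eq_of_mem_of_mem (hP : IsGroupPartition P) {G H : Finset (Fin n)} {i : Fin n}
    (hG : G ∈ P) (hH : H ∈ P) (hiG : i ∈ G) (hiH : i ∈ H) : G = H :=
  (hP.2 i).unique ⟨hG, hiG⟩ ⟨hH, hiH⟩

theorem disjoint_of_ne (hP : IsGroupPartition P) {G H : Finset (Fin n)} (hG : G ∈ P)
    (hH : H ∈ P) (hGH : G ≠ H) : Disjoint G H :=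
  Finset.disjoint_left.mpr fun _ hiG hiH => hGH (hP.eq_of_mem_of_mem hG hH hiG hiH)

end IsGroupPartition

section Utilities

variable {n : ℕ} (U : Finset (Fin n) → ℝ)

noncomputable def groupCount (x : ℝ) (G : Finset (Fin n)) : ℕ :=
  if U G = x then G.card else 0

variable {U}

theorem groupCount_of_ne {x : ℝ} {G : Finset (Fin n)} (h : U G ≠ x) : groupCount U x G = 0 :=
  if_neg h

@[simp]
theorem groupCount_self (G : Finset (Fin n)) : groupCount U (U G) G = G.card :=
  if_pos rfl

@[simp]
theorem groupCount_empty (x : ℝ) : groupCount U x ∅ = 0 := by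
  simp [groupCount]

theorem groupCount_le_card (x : ℝ) (G : Finset (Fin n)) : groupCount U x G ≤ G.card := by
  unfold groupCount; split_ifs <;> simp

variable (U)

theorem count_Psi (P : Finset (Finset (Fin n))) (x : ℝ) :
    (Psi U P).count x = ∑ G ∈ P, groupCount U x G := by
  rw [Psi, List.count_reverse, ← Multiset.coe_count, Multiset.sort_eq, Multiset.count_bind]
  simp only [Multiset.count_replicate]
  rfl

theorem Psi_pairwise_ge (P : Finset (Finset (Fin n))) : (Psi U P).Pairwise (· ≥ ·) :=
  List.pairwise_reverse.mpr (Multiset.pairwise_sort _ _)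

open Finset in
theorem count_Psi_deviation {P : Finset (Finset (Fin n))} (hP : IsGroupPartition P)
    {Gk Gk' S : Finset (Fin n)} (hGk : Gk ∈ P) (hGk' : Gk' = ∅ ∨ (Gk' ∈ P ∧ Gk' ≠ Gk))
    (hS : S ⊆ Gk) (hSne : S.Nonempty) (x : ℝ) :
    (Psi U ((((P.erase Gk).erase Gk') ∪ {Gk \ S, Gk' ∪ S}).erase ∅)).count x
        + (groupCount U x Gk + groupCount U x Gk')
      = (Psi U P).count x + (groupCount U x (Gk \ S) + groupCount U x (Gk' ∪ S)) := by
  obtain ⟨i, hi⟩ := hSne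
  have hAQ : Gk \ S ∉ (P.erase Gk).erase Gk' := fun h => by
    obtain ⟨hne, hA⟩ := mem_erase.mp (mem_of_mem_erase h)
    obtain ⟨j, hj⟩ := hP.1 _ hA
    exact hne (hP.eq_of_mem_of_mem hA hGk hj (mem_sdiff.mp hj).1)
  have hCQ : Gk' ∪ S ∉ (P.erase Gk).erase Gk' := fun h => by
    obtain ⟨hne, hC⟩ := mem_erase.mp (mem_of_mem_erase h)
    exact hne (hP.eq_of_mem_of_mem hC hGk (mem_union_right _ hi) (hS hi))
  have hAC : Gk \ S ≠ Gk' ∪ S := fun h =>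
    (mem_sdiff.mp (h ▸ mem_union_right _ hi)).2 hi
  rw [count_Psi, count_Psi, sum_erase_union_pair (groupCount_empty x) hAC hAQ hCQ,
    add_right_comm, sum_erase_erase_add_add (groupCount_empty x) hGk hGk']

end Utilities

/-- If a subset `S` of group `Gk` deviates to join group `Gk'` (possibly the empty
group, i.e. forming a new group), strictly improving over `U Gk` while not hurting
`Gk'`, then the resulting state is strictly higher in the lexicographic order of the
sorted agent-utility vectors. -/
theorem stmt0 {n : ℕ} (U : Finset (Fin n) → ℝ)
    (P : Finset (Finset (Fin n))) (hP : IsGroupPartition P)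
    (Gk Gk' S : Finset (Fin n))
    (hGk : Gk ∈ P) (hGk' : Gk' = ∅ ∨ (Gk' ∈ P ∧ Gk' ≠ Gk))
    (hS : S ⊆ Gk) (hSne : S.Nonempty)
    (himp : U (Gk' ∪ S) > U Gk)
    (hacc : Gk' ≠ ∅ → U (Gk' ∪ S) ≥ U Gk')
    (P' : Finset (Finset (Fin n)))
    (hP' : P' = (((P.erase Gk).erase Gk') ∪ {Gk \ S, Gk' ∪ S}).erase ∅) :
    List.Lex (· < ·) (Psi U P) (Psi U P') := by
  subst hP'
  have hdev := count_Psi_deviation U hP hGk hGk' hS hSne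
  have hdisj : Disjoint Gk' S := by
    rcases hGk' with rfl | ⟨hGk'P, hne⟩
    · exact Finset.disjoint_empty_left S
    · exact (hP.disjoint_of_ne hGk'P hGk hne).mono_right hS
  refine List.lex_lt_of_count_lt (Psi_pairwise_ge U _) (v := U (Gk' ∪ S)) ?_ fun x hx => ?_
  · have h := hdev (U (Gk' ∪ S))
    rw [groupCount_of_ne himp.ne, groupCount_self, Finset.card_union_of_disjoint hdisj] at h
    have := groupCount_le_card (U := U) (U (Gk' ∪ S)) Gk'
    have := hSne.card_pos
    omega
  · have hGk'x : groupCount U x Gk' = 0 := by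
      by_cases h : Gk' = ∅
      · simp [h]
      · exact groupCount_of_ne ((hacc h).trans_lt hx).ne
    have h := hdev x
    rw [groupCount_of_ne (himp.trans hx).ne, groupCount_of_ne hx.ne, hGk'x] at h
    omega
end

section
/- Every finite group formation game with shared utilities admits a Strong Acceptance Equilibrium: there exists a partition of the agents into groups such that for every group G, every subset S ⊆ G, and every other group G' (including the empty group), either U_G ≥ U_{G'∪S} or U_{G'} > U_{G'∪S}. -/
/-!
Greedy construction: among the nonempty subsets of the remaining agents pick a group `G` of
maximal utility, and among those one of maximal size; remove `G` and recurse. Nothing can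
deviate profitably into a group formed later, since `G` was available when it was chosen. A
deviation into `G` itself is never accepted: by the tie-break on size, enlarging `G` by agents
chosen later strictly lowers its utility.
-/

open Finset

variable {α β : Type*} [DecidableEq α] [LinearOrder β]

def IsStrongAcceptanceEquilibrium (U : Finset α → β) (P : Finset (Finset α)) : Prop :=
  ∀ G ∈ P, ∀ S ⊆ G, S.Nonempty →
    U S ≤ U G ∧ ∀ G' ∈ P, G' ≠ G → U (G' ∪ S) ≤ U G ∨ U (G' ∪ S) < U G'

theorem exists_greedy_group (U : Finset α → β) {R : Finset α} (hR : R.Nonempty) :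
    ∃ G ⊆ R, G.Nonempty ∧ (∀ T ⊆ R, T.Nonempty → U T ≤ U G) ∧
      ∀ S ⊆ R \ G, S.Nonempty → U (G ∪ S) < U G := by
  obtain ⟨G, hG, hG_max⟩ := (R.powerset.filter Finset.Nonempty).exists_max_image
    (fun T => toLex (U T, #T)) ⟨R, mem_filter.2 ⟨mem_powerset_self R, hR⟩⟩
  obtain ⟨hGR, hG_ne⟩ : G ⊆ R ∧ G.Nonempty := by simpa using hG
  have hlex : ∀ T ⊆ R, T.Nonempty → U T < U G ∨ U T = U G ∧ #T ≤ #G := fun T hT hT_ne =>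
    Prod.Lex.le_iff.1 (hG_max T (mem_filter.2 ⟨mem_powerset.2 hT, hT_ne⟩))
  refine ⟨G, hGR, hG_ne, fun T hT hT_ne => ?_, fun S hS ⟨x, hx⟩ => ?_⟩
  · rcases hlex T hT hT_ne with h | h
    exacts [h.le, h.1.le]
  · have hGS : G ∪ S ⊆ R := union_subset hGR (hS.trans sdiff_subset)
    rcases hlex (G ∪ S) hGS (hG_ne.mono subset_union_left) with h | ⟨_, hcard⟩
    · exact h
    · have hx_G : x ∉ G := (mem_sdiff.1 (hS hx)).2
      have : G ⊂ G ∪ S :=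
        (ssubset_iff_of_subset subset_union_left).2 ⟨x, mem_union_right G hx, hx_G⟩
      exact absurd hcard (card_lt_card this).not_ge

theorem IsStrongAcceptanceEquilibrium.insert {U : Finset α → β} {P : Finset (Finset α)}
    {R G : Finset α}
    (hP : IsStrongAcceptanceEquilibrium U P) (hP_sub : ∀ G' ∈ P, G' ⊆ R \ G) (hGR : G ⊆ R)
    (hG_max : ∀ T ⊆ R, T.Nonempty → U T ≤ U G)
    (hG_strict : ∀ S ⊆ R \ G, S.Nonempty → U (G ∪ S) < U G) :
    IsStrongAcceptanceEquilibrium U (insert G P) := by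
  have hP_subR : ∀ G' ∈ P, G' ⊆ R := fun G' hG' => (hP_sub G' hG').trans sdiff_subset
  intro G₁ hG₁_mem S hS hS_ne
  rcases mem_insert.1 hG₁_mem with rfl | hG₁
  · refine ⟨hG_max S (hS.trans hGR) hS_ne, fun G' hG' hne => Or.inl ?_⟩
    have hG'P : G' ∈ P := (mem_insert.1 hG').resolve_left hne
    exact hG_max _ (union_subset (hP_subR G' hG'P) (hS.trans hGR)) (hS_ne.mono subset_union_right)
  · obtain ⟨hS_le, hdev⟩ := hP G₁ hG₁ S hS hS_ne
    refine ⟨hS_le, fun G' hG' hne => ?_⟩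
    rcases mem_insert.1 hG' with hG'_eq | hG'
    · rw [hG'_eq]
      exact Or.inr (hG_strict S (hS.trans (hP_sub G₁ hG₁)) hS_ne)
    · exact hdev G' hG' hne

theorem exists_finpartition_isStrongAcceptanceEquilibrium (U : Finset α → β) (R : Finset α) :
    ∃ P : Finpartition R, IsStrongAcceptanceEquilibrium U P.parts := by
  induction R using Finset.strongInduction with
  | _ R ih =>
    rcases R.eq_empty_or_nonempty with rfl | hR
    · exact ⟨Finpartition.empty _, by simp [IsStrongAcceptanceEquilibrium]⟩
    obtain ⟨G, hGR, hG_ne, hG_max, hG_strict⟩ := exists_greedy_group U hR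
    obtain ⟨P, hP⟩ := ih (R \ G) (sdiff_ssubset hGR hG_ne)
    refine ⟨P.extend hG_ne.ne_empty disjoint_sdiff_self_left (sdiff_union_of_subset hGR), ?_⟩
    rw [Finpartition.extend_parts]
    exact hP.insert (fun G' => P.subset) hGR hG_max hG_strict

/-- Every finite group formation game with shared utilities admits a Strong
Acceptance Equilibrium: a partition of the agents into (nonempty) groups such that
for every group `G`, every nonempty subset `S ⊆ G`, and every other group `G'`
(including the empty group, whose utility is `-∞`, which yields the condition
`U G ≥ U S`), either `U G ≥ U (G' ∪ S)` or `U G' > U (G' ∪ S)`. -/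
theorem stmt1 {n : ℕ} (U : Finset (Fin n) → ℝ) :
    ∃ P : Finset (Finset (Fin n)),
      ((∀ G ∈ P, G.Nonempty) ∧ ∀ i : Fin n, ∃! G, G ∈ P ∧ i ∈ G) ∧
      ∀ G ∈ P, ∀ S ⊆ G, S.Nonempty →
        U G ≥ U S ∧
        ∀ G' ∈ P, G' ≠ G → (U G ≥ U (G' ∪ S) ∨ U G' > U (G' ∪ S)) := by
  obtain ⟨P, hP⟩ := exists_finpartition_isStrongAcceptanceEquilibrium U univ
  exact ⟨P.parts,
    ⟨fun G => P.nonempty_of_mem_parts, fun i => P.existsUnique_mem (mem_univ i)⟩, hP⟩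
end

section
/- Any sequence of improving deviations—where an improving deviation moves a subset S of a group to another group G' with U_{G'∪S} > U_{G_{σ_S}} and U_{G'∪S} ≥ U_{G'}—terminates in finitely many steps, and the terminal partition is a Strong Acceptance Equilibrium. -/
/-- An improving deviation: a nonempty subset `S` of an existing group `Gk` moves
jointly to another (possibly empty) group `Gk'`, where the deviating agents strictly
benefit (`U (Gk' ∪ S) > U Gk`) and the receiving group weakly benefits
(`U (Gk' ∪ S) ≥ U Gk'`; vacuous for the empty group, whose utility is `-∞`). -/
def ImprovingStep {n : ℕ} (U : Finset (Fin n) → ℝ)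
    (P P' : Finset (Finset (Fin n))) : Prop :=
  ∃ Gk ∈ P, ∃ S ⊆ Gk, S.Nonempty ∧
    ∃ Gk' : Finset (Fin n), (Gk' = ∅ ∨ (Gk' ∈ P ∧ Gk' ≠ Gk)) ∧
      U (Gk' ∪ S) > U Gk ∧ (Gk' ≠ ∅ → U (Gk' ∪ S) ≥ U Gk') ∧
      P' = (((P.erase Gk).erase Gk') ∪ {Gk \ S, Gk' ∪ S}).erase ∅

/-!
Give every group `G` the weight `|G| · (n + 1) ^ r(G)`, where `r(G)` is the number of coalitions
of strictly smaller utility, and let the potential of a partition be the total weight of its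
groups. In an improving deviation of `S` from `G` to `G'`, the new group `G' ∪ S` has strictly
larger rank than `G` and weakly larger rank than `G'`; since `|G| ≤ n < n + 1`, one member of `S`
at the new rank already outweighs all of `G`, so the potential strictly increases. It is bounded
by the total weight of all coalitions, hence every sequence of improving deviations is finite.
A terminal partition is an equilibrium because each violation of the equilibrium conditions
is itself an improving deviation.
-/

open Finset

namespace GroupFormation

variable {n : ℕ} (U : Finset (Fin n) → ℝ)

noncomputable def utilityRank (G : Finset (Fin n)) : ℕ :=
  #{H | U H < U G}

noncomputable def groupWeight (G : Finset (Fin n)) : ℕ :=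
  #G * (n + 1) ^ utilityRank U G

noncomputable def potential (P : Finset (Finset (Fin n))) : ℕ :=
  ∑ G ∈ P, groupWeight U G

variable {U}

lemma utilityRank_le_utilityRank {G H : Finset (Fin n)} (h : U G ≤ U H) :
    utilityRank U G ≤ utilityRank U H :=
  card_le_card fun _ hK => by simp only [mem_filter, mem_univ, true_and] at hK ⊢; linarith

lemma utilityRank_lt_utilityRank {G H : Finset (Fin n)} (h : U G < U H) :
    utilityRank U G < utilityRank U H := by
  refine card_lt_card ⟨fun _ hK => ?_, fun hsub => ?_⟩
  · simp only [mem_filter, mem_univ, true_and] at hK ⊢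
    linarith
  · simpa using hsub (by simpa using h : G ∈ ({K | U K < U H} : Finset _))

@[simp]
lemma groupWeight_empty : groupWeight U ∅ = 0 := by
  simp [groupWeight]

lemma groupWeight_add_groupWeight_lt {G G' S : Finset (Fin n)} (hS : S.Nonempty)
    (hG'S : Disjoint G' S) (hgt : U G < U (G' ∪ S)) (hge : G' ≠ ∅ → U G' ≤ U (G' ∪ S)) :
    groupWeight U G + groupWeight U G' < groupWeight U (G' ∪ S) := by
  set r := utilityRank U (G' ∪ S)
  have hG : groupWeight U G < (n + 1) ^ r :=
    calc #G * (n + 1) ^ utilityRank U G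
        < (n + 1) * (n + 1) ^ utilityRank U G := by
          gcongr
          simpa using Nat.lt_succ_of_le (card_le_univ G)
      _ = (n + 1) ^ (utilityRank U G + 1) := by ring
      _ ≤ (n + 1) ^ r := Nat.pow_le_pow_right n.succ_pos (utilityRank_lt_utilityRank hgt)
  have hG' : groupWeight U G' ≤ #G' * (n + 1) ^ r := by
    obtain rfl | hne := eq_or_ne G' ∅
    · simp
    · exact Nat.mul_le_mul_left _
        (Nat.pow_le_pow_right n.succ_pos (utilityRank_le_utilityRank (hge hne)))
  have hScard : 1 ≤ #S := card_pos.2 hS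
  have hw : groupWeight U (G' ∪ S) = (#G' + #S) * (n + 1) ^ r := by
    rw [groupWeight, card_union_of_disjoint hG'S]
  rw [hw]
  nlinarith

lemma potential_le_potential_univ (P : Finset (Finset (Fin n))) :
    potential U P ≤ potential U univ :=
  sum_le_sum_of_subset (subset_univ P)

lemma potential_insert {P : Finset (Finset (Fin n))} {G : Finset (Fin n)} (hG : G ∉ P) :
    potential U (insert G P) = groupWeight U G + potential U P :=
  sum_insert hG

lemma potential_le_potential_erase_add (P : Finset (Finset (Fin n))) (G : Finset (Fin n)) :
    potential U P ≤ potential U (P.erase G) + groupWeight U G :=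
  calc potential U P ≤ potential U (insert G (P.erase G)) :=
        sum_le_sum_of_subset (insert_erase_subset G P)
    _ = potential U (P.erase G) + groupWeight U G := by
        rw [potential_insert (notMem_erase G P), add_comm]

end GroupFormation

open GroupFormation

lemma IsGroupPartition.pairwiseDisjoint {n : ℕ} {P : Finset (Finset (Fin n))}
    (hP : IsGroupPartition P) : (P : Set (Finset (Fin n))).PairwiseDisjoint id := by
  intro G hG H hH hne
  refine disjoint_left.2 fun i hiG hiH => hne ?_
  obtain ⟨_, -, huniq⟩ := hP.2 i
  exact (huniq G ⟨hG, hiG⟩).trans (huniq H ⟨hH, hiH⟩).symm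

namespace ImprovingStep

variable {n : ℕ} {U : Finset (Fin n) → ℝ} {P P' : Finset (Finset (Fin n))}

lemma pairwiseDisjoint (hP : (P : Set (Finset (Fin n))).PairwiseDisjoint id)
    (h : ImprovingStep U P P') : (P' : Set (Finset (Fin n))).PairwiseDisjoint id := by
  obtain ⟨G, hG, S, hSG, -, G', hG', -, -, rfl⟩ := h
  set Q := (P.erase G).erase G'
  have hGG' : Disjoint G G' := by
    rcases hG' with rfl | ⟨hG'P, hne⟩
    · exact disjoint_empty_right G
    · exact hP hG hG'P hne.symm
  have hQ : ∀ H ∈ Q, Disjoint H G ∧ Disjoint H G' := by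
    intro H hH
    simp only [Q, mem_erase] at hH
    refine ⟨hP hH.2.2 hG hH.2.1, ?_⟩
    rcases hG' with rfl | ⟨hG'P, -⟩
    · exact disjoint_empty_right H
    · exact hP hH.2.2 hG'P hH.1
  have hnew : Disjoint (G \ S) (G' ∪ S) :=
    disjoint_union_right.2 ⟨hGG'.mono_left sdiff_subset, sdiff_disjoint⟩
  have hQdisj : (Q : Set (Finset (Fin n))).PairwiseDisjoint id :=
    hP.subset (coe_subset.2 ((erase_subset _ _).trans (erase_subset _ _)))
  have hnewQ :
      (insert (G \ S) (insert (G' ∪ S) (Q : Set (Finset (Fin n))))).PairwiseDisjoint id := by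
    refine (hQdisj.insert fun H hH _ => ?_).insert fun H hH _ => ?_
    · exact disjoint_union_left.2 ⟨(hQ H hH).2.symm, (hQ H hH).1.symm.mono_left hSG⟩
    · rcases hH with rfl | hH
      · exact hnew
      · exact (hQ H hH).1.symm.mono_left sdiff_subset
  refine hnewQ.subset fun H => ?_
  simp only [coe_erase, coe_union, coe_insert, coe_singleton, Set.mem_sdiff, Set.mem_union,
    Set.mem_insert_iff, Set.mem_singleton_iff, mem_coe]
  tauto

lemma potential_lt (hP : (P : Set (Finset (Fin n))).PairwiseDisjoint id)
    (h : ImprovingStep U P P') : potential U P < potential U P' := by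
  obtain ⟨G, hG, S, hSG, hS, G', hG', hgt, hge, rfl⟩ := h
  set Q := (P.erase G).erase G'
  have hG'S : Disjoint G' S := by
    rcases hG' with rfl | ⟨hG'P, hne⟩
    · exact disjoint_empty_left S
    · exact (hP hG'P hG hne).mono_right hSG
  have hnotQ : G' ∪ S ∉ Q := by
    intro hmem
    simp only [Q, mem_erase] at hmem
    obtain ⟨x, hx⟩ := hS
    exact disjoint_left.1 (hP hmem.2.2 hG hmem.2.1) (mem_union_right _ hx) (hSG hx)
  have hweight := groupWeight_add_groupWeight_lt hS hG'S hgt hge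
  calc potential U P ≤ potential U Q + groupWeight U G' + groupWeight U G :=
        (potential_le_potential_erase_add P G).trans
          (Nat.add_le_add_right (potential_le_potential_erase_add _ G') _)
    _ < potential U Q + groupWeight U (G' ∪ S) := by omega
    _ = potential U (insert (G' ∪ S) Q) := by rw [potential_insert hnotQ, add_comm]
    _ ≤ potential U (Q ∪ {G \ S, G' ∪ S}) :=
        sum_le_sum_of_subset (insert_subset (by simp) subset_union_left)
    _ = potential U ((Q ∪ {G \ S, G' ∪ S}).erase ∅) :=
        (sum_erase _ groupWeight_empty).symm

end ImprovingStep

section Equilibrium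

variable {n : ℕ} {U : Finset (Fin n) → ℝ} {P : Finset (Finset (Fin n))} {G S : Finset (Fin n)}

lemma exists_improvingStep_of_lt_utility_subset (hG : G ∈ P) (hSG : S ⊆ G) (hS : S.Nonempty)
    (h : U G < U S) : ∃ P', ImprovingStep U P P' :=
  ⟨_, G, hG, S, hSG, hS, ∅, .inl rfl, by simpa using h, fun h => absurd rfl h, rfl⟩

lemma exists_improvingStep_of_lt_utility_union (hG : G ∈ P) (hSG : S ⊆ G) (hS : S.Nonempty)
    {G' : Finset (Fin n)} (hG' : G' ∈ P) (hne : G' ≠ G) (hgt : U G < U (G' ∪ S))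
    (hge : U G' ≤ U (G' ∪ S)) : ∃ P', ImprovingStep U P P' :=
  ⟨_, G, hG, S, hSG, hS, G', .inr ⟨hG', hne⟩, hgt, fun _ => hge, rfl⟩

end Equilibrium

/-- Any sequence of improving deviations terminates in finitely many steps (there is
no infinite sequence of improving deviations starting from a partition), and any
terminal partition (one admitting no improving deviation) is a Strong Acceptance
Equilibrium. -/
theorem stmt3 {n : ℕ} (U : Finset (Fin n) → ℝ) :
    (¬ ∃ seq : ℕ → Finset (Finset (Fin n)),
        IsGroupPartition (seq 0) ∧ ∀ t, ImprovingStep U (seq t) (seq (t + 1))) ∧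
    (∀ P : Finset (Finset (Fin n)), IsGroupPartition P →
      (∀ P', ¬ ImprovingStep U P P') →
      ∀ G ∈ P, ∀ S ⊆ G, S.Nonempty →
        U G ≥ U S ∧
        ∀ G' ∈ P, G' ≠ G → (U G ≥ U (G' ∪ S) ∨ U G' > U (G' ∪ S))) := by
  refine ⟨fun ⟨seq, h0, hstep⟩ => ?_,
    fun P _ hnone G hG S hSG hS => ⟨?_, fun G' hG' hne => ?_⟩⟩
  · have hdisj : ∀ t, (seq t : Set (Finset (Fin n))).PairwiseDisjoint id := fun t =>
      Nat.rec h0.pairwiseDisjoint (fun t ih => (hstep t).pairwiseDisjoint ih) t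
    have hmono : StrictMono (potential U ∘ seq) :=
      strictMono_nat_of_lt_succ fun t => (hstep t).potential_lt (hdisj t)
    exact (potential U univ).not_succ_le_self
      (hmono.le_apply.trans (potential_le_potential_univ (seq _)))
  · by_contra! h
    exact (exists_improvingStep_of_lt_utility_subset hG hSG hS h).elim hnone
  · by_contra! h
    exact (exists_improvingStep_of_lt_utility_union hG hSG hS hG' hne h.1 h.2).elim hnone
end

section
/- The greedy construction that iteratively selects, among the remaining agents, a subset of maximum utility (breaking ties in favor of larger cardinality) as the next group produces a Strong Acceptance Equilibrium in which the first group has the maximum utility among all subsets of N. -/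
/-!
Every group of the greedy partition maximises utility among the agents still unassigned when it
was formed. A coalition `S ⊆ G k` joining a later group `G j` forms a set of agents that were
still unassigned at step `k`, so `G k` is at least as good. Joining an earlier group `G j` forms a
set of agents unassigned at step `j`, so `G j` is at least as good, and equality is excluded by
the tie-break towards larger groups, since `G j ∪ S` strictly contains `G j`.
-/

open Finset

namespace GreedyPartition

variable {α β : Type*} [Fintype α] [DecidableEq α] [PartialOrder β]

def remaining (G : ℕ → Finset α) (k : ℕ) : Finset α :=
  univ \ (range k).biUnion G

variable {G : ℕ → Finset α}

@[simp]
theorem remaining_zero : remaining G 0 = univ := by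
  simp [remaining]

theorem remaining_anti {j k : ℕ} (hjk : j ≤ k) : remaining G k ⊆ remaining G j :=
  sdiff_subset_sdiff le_rfl (biUnion_subset_biUnion_of_subset_left _ (range_subset_range.2 hjk))

theorem disjoint_remaining_of_lt {j k : ℕ} (hjk : j < k) : Disjoint (G j) (remaining G k) :=
  disjoint_left.2 fun _ hx hx' => (mem_sdiff.1 hx').2 (mem_biUnion.2 ⟨j, mem_range.2 hjk, hx⟩)

variable {m : ℕ}

theorem union_subset_remaining (hsub : ∀ k < m, G k ⊆ remaining G k)
    {i j k : ℕ} (hij : i ≤ j) (hik : i ≤ k) (hj : j < m) (hk : k < m)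
    {S : Finset α} (hS : S ⊆ G k) :
    G j ∪ S ⊆ remaining G i :=
  union_subset ((hsub j hj).trans (remaining_anti hij))
    (hS.trans ((hsub k hk).trans (remaining_anti hik)))

variable {U : Finset α → β}

theorem utility_union_le_of_lt (hsub : ∀ k < m, G k ⊆ remaining G k)
    (hmax : ∀ k < m, ∀ S ⊆ remaining G k, S.Nonempty → U S ≤ U (G k))
    {j k : ℕ} (hkj : k < j) (hj : j < m) {S : Finset α} (hS : S ⊆ G k) (hSne : S.Nonempty) :
    U (G j ∪ S) ≤ U (G k) :=
  hmax k (hkj.trans hj) _ (union_subset_remaining hsub hkj.le le_rfl hj (hkj.trans hj) hS)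
    (hSne.mono subset_union_right)

theorem utility_union_lt_of_lt (hsub : ∀ k < m, G k ⊆ remaining G k)
    (hmax : ∀ k < m, ∀ S ⊆ remaining G k, S.Nonempty → U S ≤ U (G k))
    (hcard : ∀ k < m, ∀ S ⊆ remaining G k, S.Nonempty → U S = U (G k) → #S ≤ #(G k))
    {j k : ℕ} (hjk : j < k) (hk : k < m) {S : Finset α} (hS : S ⊆ G k) (hSne : S.Nonempty) :
    U (G j ∪ S) < U (G j) := by
  have hj : j < m := hjk.trans hk
  have hsubset := union_subset_remaining hsub le_rfl hjk.le hj hk hS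
  have hUne : (G j ∪ S).Nonempty := hSne.mono subset_union_right
  refine (hmax j hj _ hsubset hUne).lt_of_ne fun heq => ?_
  have hgrow : G j ⊂ G j ∪ S := by
    obtain ⟨x, hx⟩ := hSne
    refine (ssubset_iff_of_subset subset_union_left).2 ⟨x, mem_union_right _ hx, fun hxj => ?_⟩
    exact disjoint_left.1 (disjoint_remaining_of_lt hjk) hxj ((hsub k hk) (hS hx))
  exact (card_lt_card hgrow).not_ge (hcard j hj _ hsubset hUne heq)

end GreedyPartition

open GreedyPartition in
theorem stmt4_general {n : ℕ} (U : Finset (Fin n) → ℝ)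
    (m : ℕ) (hm : 0 < m)
    (G : ℕ → Finset (Fin n)) (Nk : ℕ → Finset (Fin n))
    (hNk : ∀ k, Nk k = Finset.univ \ (Finset.range k).biUnion G)
    (hsub : ∀ k < m, G k ⊆ Nk k)
    (hmax : ∀ k < m, ∀ S ⊆ Nk k, S.Nonempty → U S ≤ U (G k))
    (hcard : ∀ k < m, ∀ S ⊆ Nk k, S.Nonempty → U S = U (G k) → S.card ≤ (G k).card)
    (P : Finset (Finset (Fin n))) (hP : P = (Finset.range m).image G) :
    (∀ S : Finset (Fin n), S.Nonempty → U S ≤ U (G 0)) ∧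
    ∀ Gp ∈ P, ∀ S ⊆ Gp, S.Nonempty →
      U Gp ≥ U S ∧
      ∀ G' ∈ P, G' ≠ Gp → (U Gp ≥ U (G' ∪ S) ∨ U G' > U (G' ∪ S)) := by
  obtain rfl : Nk = remaining G := funext hNk
  subst hP
  refine ⟨fun S hS => hmax 0 hm S (by simp) hS, ?_⟩
  simp only [mem_image, mem_range, forall_exists_index, and_imp]
  rintro _ k hk rfl S hS hSne
  refine ⟨hmax k hk S (hS.trans (hsub k hk)) hSne, ?_⟩
  rintro _ j hj rfl hjk
  rcases lt_trichotomy j k with hlt | rfl | hgt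
  · exact Or.inr (utility_union_lt_of_lt hsub hmax hcard hlt hk hS hSne)
  · exact absurd rfl hjk
  · exact Or.inl (utility_union_le_of_lt hsub hmax hgt hj hS hSne)

/-- The greedy construction: `N₁ = N`; at step `k` pick `G k ⊆ Nk k` of maximum
utility among nonempty subsets of the remaining agents `Nk k` (ties broken in favor
of larger cardinality), and remove it. The resulting partition is a Strong
Acceptance Equilibrium, and the first group has maximum utility among all nonempty
subsets of `N`. -/
theorem stmt4 {n : ℕ} (U : Finset (Fin n) → ℝ)
    (m : ℕ) (hm : 0 < m)
    (G : ℕ → Finset (Fin n)) (Nk : ℕ → Finset (Fin n))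
    (hNk : ∀ k, Nk k = Finset.univ \ (Finset.range k).biUnion G)
    (hne : ∀ k < m, (G k).Nonempty)
    (hsub : ∀ k < m, G k ⊆ Nk k)
    (hmax : ∀ k < m, ∀ S ⊆ Nk k, S.Nonempty → U S ≤ U (G k))
    (hcard : ∀ k < m, ∀ S ⊆ Nk k, S.Nonempty → U S = U (G k) → S.card ≤ (G k).card)
    (hstop : Nk m = ∅)
    (P : Finset (Finset (Fin n))) (hP : P = (Finset.range m).image G) :
    (∀ S : Finset (Fin n), S.Nonempty → U S ≤ U (G 0)) ∧
    ∀ Gp ∈ P, ∀ S ⊆ Gp, S.Nonempty →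
      U Gp ≥ U S ∧
      ∀ G' ∈ P, G' ≠ Gp → (U Gp ≥ U (G' ∪ S) ∨ U G' > U (G' ∪ S)) :=
  stmt4_general U m hm G Nk hNk hsub hmax hcard P hP
end

section
/- In any Acceptance Equilibrium of the geometric group formation game, no two distinct groups are mutually encroaching: there do not exist groups G, G' with an agent of G located in the convex hull of G' and an agent of G' located in the convex hull of G. -/
/-!
An agent `k` of `A` lying in the territory of `B` would bring `B` its resources without
changing `B`'s coverage, so `B` strictly gains by accepting `k`; the acceptance equilibrium
condition then forces `k` to prefer staying, i.e. `U B < U (insert k B) ≤ U A`. Mutual encroachment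
would give both `U B < U A` and `U A < U B`.
-/

section GroupFormation

variable {ι E : Type*}

theorem notMem_of_mem_of_existsUnique {P : Finset (Finset ι)}
    (hP : ∀ i, ∃! G, G ∈ P ∧ i ∈ G) {A B : Finset ι} (hA : A ∈ P) (hB : B ∈ P)
    (hAB : A ≠ B) {k : ι} (hkA : k ∈ A) : k ∉ B := fun hkB =>
  hAB ((hP k).unique ⟨hA, hkA⟩ ⟨hB, hkB⟩)

variable [DecidableEq ι] [AddCommGroup E] [Module ℝ E]

theorem utility_lt_insert_of_mem_convexHull {x : ι → E} {r : ι → ℝ}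
    {D : Finset ι → ℝ} (hD : ∀ (G : Finset ι) i, x i ∈ convexHull ℝ (x '' ↑G) → D (insert i G) = D G)
    {f : ℝ → ℝ → ℝ} (hf : ∀ c, StrictMono fun R => f R c)
    {U : Finset ι → ℝ} (hU : ∀ G, U G = f (∑ i ∈ G, r i) (D G))
    {B : Finset ι} {k : ι} (hrk : 0 < r k) (hkB : k ∉ B)
    (hkx : x k ∈ convexHull ℝ (x '' ↑B)) : U B < U (insert k B) := by
  rw [hU, hU, hD B k hkx, Finset.sum_insert hkB]
  exact hf (D B) (lt_add_of_pos_left _ hrk)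

theorem utility_lt_of_encroaches {x : ι → E} {r : ι → ℝ} (hr : ∀ i, 0 < r i)
    {D : Finset ι → ℝ} (hD : ∀ (G : Finset ι) i, x i ∈ convexHull ℝ (x '' ↑G) → D (insert i G) = D G)
    {f : ℝ → ℝ → ℝ} (hf : ∀ c, StrictMono fun R => f R c)
    {U : Finset ι → ℝ} (hU : ∀ G, U G = f (∑ i ∈ G, r i) (D G))
    {P : Finset (Finset ι)} (hP : ∀ i, ∃! G, G ∈ P ∧ i ∈ G)
    (hAE : ∀ G ∈ P, ∀ i ∈ G, ∀ G' ∈ P, G' ≠ G →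
      U G ≥ U (insert i G') ∨ U G' > U (insert i G'))
    {A B : Finset ι} (hA : A ∈ P) (hB : B ∈ P) (hAB : A ≠ B) {k : ι} (hkA : k ∈ A)
    (hkx : x k ∈ convexHull ℝ (x '' ↑B)) : U B < U A := by
  have hgain : U B < U (insert k B) := utility_lt_insert_of_mem_convexHull hD hf hU (hr k)
    (notMem_of_mem_of_existsUnique hP hA hB hAB hkA) hkx
  rcases hAE A hA k hkA B hB hAB.symm with hstay | hreject
  · exact hgain.trans_le hstay
  · exact absurd hreject hgain.not_gt

end GroupFormation

theorem stmt6_general {n d : ℕ}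
    (x : Fin n → EuclideanSpace ℝ (Fin d)) (r : Fin n → ℝ)
    (hr : ∀ i, 0 < r i)
    (D : Finset (Fin n) → ℝ)
    (hD : ∀ (G : Finset (Fin n)) (i : Fin n),
      x i ∈ convexHull ℝ (x '' ↑G) → D (insert i G) = D G)
    (f : ℝ → ℝ → ℝ)
    (hf1 : ∀ c : ℝ, StrictMono fun R => f R c)
    (U : Finset (Fin n) → ℝ) (hU : ∀ G, U G = f (∑ i ∈ G, r i) (D G))
    (P : Finset (Finset (Fin n)))
    (hP : (∀ G ∈ P, G.Nonempty) ∧ ∀ i : Fin n, ∃! G, G ∈ P ∧ i ∈ G)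
    (hAE : ∀ G ∈ P, ∀ i ∈ G, ∀ G' ∈ P, G' ≠ G →
      U G ≥ U (insert i G') ∨ U G' > U (insert i G')) :
    ¬ ∃ G ∈ P, ∃ G' ∈ P, G ≠ G' ∧
        (∃ i ∈ G, x i ∈ convexHull ℝ (x '' ↑G')) ∧
        (∃ j ∈ G', x j ∈ convexHull ℝ (x '' ↑G)) := by
  rintro ⟨G, hG, G', hG', hne, ⟨i, hiG, hix⟩, ⟨j, hjG', hjx⟩⟩
  have hlt := utility_lt_of_encroaches hr hD hf1 hU hP.2 hAE hG hG' hne hiG hix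
  have hgt := utility_lt_of_encroaches hr hD hf1 hU hP.2 hAE hG' hG hne.symm hjG' hjx
  exact hlt.asymm hgt

/-- In any Acceptance Equilibrium of the geometric group formation game
(locations `x i ∈ ℝ^d`, positive resources `r i`, coverage `D` invariant under
adding a point of the convex hull, utility `U G = f (∑ i ∈ G, r i) (D G)` with `f`
strictly increasing in resources and strictly decreasing in coverage), no two
distinct groups are mutually encroaching. -/
theorem stmt6 {n d : ℕ}
    (x : Fin n → EuclideanSpace ℝ (Fin d)) (r : Fin n → ℝ)
    (hr : ∀ i, 0 < r i)
    (D : Finset (Fin n) → ℝ)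
    (hD : ∀ (G : Finset (Fin n)) (i : Fin n),
      x i ∈ convexHull ℝ (x '' ↑G) → D (insert i G) = D G)
    (f : ℝ → ℝ → ℝ)
    (hf1 : ∀ c : ℝ, StrictMono fun R => f R c)
    (hf2 : ∀ R : ℝ, StrictAnti (f R))
    (U : Finset (Fin n) → ℝ) (hU : ∀ G, U G = f (∑ i ∈ G, r i) (D G))
    (P : Finset (Finset (Fin n)))
    (hP : (∀ G ∈ P, G.Nonempty) ∧ ∀ i : Fin n, ∃! G, G ∈ P ∧ i ∈ G)
    (hAE : ∀ G ∈ P, ∀ i ∈ G, ∀ G' ∈ P, G' ≠ G →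
      U G ≥ U (insert i G') ∨ U G' > U (insert i G')) :
    ¬ ∃ G ∈ P, ∃ G' ∈ P, G ≠ G' ∧
        (∃ i ∈ G, x i ∈ convexHull ℝ (x '' ↑G')) ∧
        (∃ j ∈ G', x j ∈ convexHull ℝ (x '' ↑G)) :=
  stmt6_general x r hr D hD f hf1 U hU P hP hAE
end

section
/- In any Acceptance Equilibrium of the geometric group formation game, if group G encroaches on group G' (some member of G lies in the convex hull of G''s locations), then U_G > U_{G'}. -/
/-! Adding an encroaching agent `i` to `G'` leaves its coverage unchanged and strictly raises its
resources, so `U (insert i G') > U G'`: the group `G'` would accept `i`. Acceptance Equilibrium then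
forces `i` to weakly prefer staying in `G`, i.e. `U G ≥ U (insert i G') > U G'`. -/

lemma utility_insert_of_mem_convexHull {ι E : Type*} [DecidableEq ι] [AddCommGroup E]
    [Module ℝ E] (x : ι → E) (r : ι → ℝ) (D : Finset ι → ℝ) (f : ℝ → ℝ → ℝ)
    (hf : ∀ c : ℝ, StrictMono fun R => f R c)
    (hD : ∀ (G : Finset ι) (i : ι), x i ∈ convexHull ℝ (x '' ↑G) → D (insert i G) = D G)
    {G : Finset ι} {i : ι} (hri : 0 < r i) (hi : i ∉ G) (hconv : x i ∈ convexHull ℝ (x '' ↑G)) :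
    f (∑ j ∈ G, r j) (D G) < f (∑ j ∈ insert i G, r j) (D (insert i G)) := by
  rw [hD G i hconv, Finset.sum_insert hi]
  exact hf (D G) (lt_add_of_pos_left _ hri)

theorem stmt7_general {n d : ℕ}
    (x : Fin n → EuclideanSpace ℝ (Fin d)) (r : Fin n → ℝ)
    (hr : ∀ i, 0 < r i)
    (D : Finset (Fin n) → ℝ)
    (hD : ∀ (G : Finset (Fin n)) (i : Fin n),
      x i ∈ convexHull ℝ (x '' ↑G) → D (insert i G) = D G)
    (f : ℝ → ℝ → ℝ)
    (hf1 : ∀ c : ℝ, StrictMono fun R => f R c)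
    (U : Finset (Fin n) → ℝ) (hU : ∀ G, U G = f (∑ i ∈ G, r i) (D G))
    (P : Finset (Finset (Fin n)))
    (hP : (∀ G ∈ P, G.Nonempty) ∧ ∀ i : Fin n, ∃! G, G ∈ P ∧ i ∈ G)
    (hAE : ∀ G ∈ P, ∀ i ∈ G, ∀ G' ∈ P, G' ≠ G →
      U G ≥ U (insert i G') ∨ U G' > U (insert i G'))
    (G G' : Finset (Fin n)) (hG : G ∈ P) (hG' : G' ∈ P) (hne : G ≠ G')
    (henc : ∃ i ∈ G, x i ∈ convexHull ℝ (x '' ↑G')) :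
    U G > U G' := by
  obtain ⟨i, hiG, hconv⟩ := henc
  have hiG' : i ∉ G' := fun hiG' => hne ((hP.2 i).unique ⟨hG, hiG⟩ ⟨hG', hiG'⟩)
  have hgain : U G' < U (insert i G') := by
    rw [hU, hU]
    exact utility_insert_of_mem_convexHull x r D f hf1 hD (hr i) hiG' hconv
  rcases hAE G hG i hiG G' hG' hne.symm with hstay | hreject
  · exact hgain.trans_le hstay
  · exact absurd hgain hreject.asymm

/-- In any Acceptance Equilibrium of the geometric group formation game, if group
`G` encroaches on group `G'` (some member of `G` lies in the convex hull of the
locations of `G'`'s members), then `U G > U G'`. -/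
theorem stmt7 {n d : ℕ}
    (x : Fin n → EuclideanSpace ℝ (Fin d)) (r : Fin n → ℝ)
    (hr : ∀ i, 0 < r i)
    (D : Finset (Fin n) → ℝ)
    (hD : ∀ (G : Finset (Fin n)) (i : Fin n),
      x i ∈ convexHull ℝ (x '' ↑G) → D (insert i G) = D G)
    (f : ℝ → ℝ → ℝ)
    (hf1 : ∀ c : ℝ, StrictMono fun R => f R c)
    (hf2 : ∀ R : ℝ, StrictAnti (f R))
    (U : Finset (Fin n) → ℝ) (hU : ∀ G, U G = f (∑ i ∈ G, r i) (D G))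
    (P : Finset (Finset (Fin n)))
    (hP : (∀ G ∈ P, G.Nonempty) ∧ ∀ i : Fin n, ∃! G, G ∈ P ∧ i ∈ G)
    (hAE : ∀ G ∈ P, ∀ i ∈ G, ∀ G' ∈ P, G' ≠ G →
      U G ≥ U (insert i G') ∨ U G' > U (insert i G'))
    (G G' : Finset (Fin n)) (hG : G ∈ P) (hG' : G' ∈ P) (hne : G ≠ G')
    (henc : ∃ i ∈ G, x i ∈ convexHull ℝ (x '' ↑G')) :
    U G > U G' :=
  stmt7_general x r hr D hD f hf1 U hU P hP hAE G G' hG hG' hne henc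
end

section
/- For every Acceptance Equilibrium of the geometric group formation game, the encroachment graph—whose nodes are the groups of the partition and which has a directed edge from G to G' whenever some member of G is located in the convex hull of G''s member locations—is a directed acyclic graph. -/
/-!
Along an encroachment edge `A → B` utilities strictly decrease: the encroaching member `i ∈ A` lies
in the convex hull of `B`, so admitting `i` leaves the coverage of `B` unchanged while adding the
resource `r i > 0`; thus `B` would strictly gain, and acceptance equilibrium forces `U A ≥ U (B ∪ {i})
> U B`. A cycle would then give `U G < U G`.
-/

theorem Relation.not_transGen_self_of_lt {α β : Type*} [Preorder β] {rel : α → α → Prop}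
    (u : α → β) (h : ∀ a b, rel a b → u b < u a) (a : α) : ¬ Relation.TransGen rel a a := by
  intro hcycle
  have hlt : Relation.TransGen (· > ·) (u a) (u a) := hcycle.lift u h
  rw [Relation.transGen_eq_self] at hlt
  exact lt_irrefl _ hlt

theorem utility_lt_utility_insert {ι : Type*} [DecidableEq ι] {r : ι → ℝ} {D : Finset ι → ℝ}
    {f : ℝ → ℝ → ℝ} (hf : ∀ c : ℝ, StrictMono fun R => f R c)
    {U : Finset ι → ℝ} (hU : ∀ G, U G = f (∑ i ∈ G, r i) (D G))
    {G : Finset ι} {i : ι} (hri : 0 < r i) (hi : i ∉ G) (hD : D (insert i G) = D G) :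
    U G < U (insert i G) := by
  rw [hU, hU, Finset.sum_insert hi, hD]
  exact hf (D G) (lt_add_of_pos_left _ hri)

theorem stmt8_general {n d : ℕ}
    (x : Fin n → EuclideanSpace ℝ (Fin d)) (r : Fin n → ℝ)
    (hr : ∀ i, 0 < r i)
    (D : Finset (Fin n) → ℝ)
    (hD : ∀ (G : Finset (Fin n)) (i : Fin n),
      x i ∈ convexHull ℝ (x '' ↑G) → D (insert i G) = D G)
    (f : ℝ → ℝ → ℝ)
    (hf1 : ∀ c : ℝ, StrictMono fun R => f R c)
    (U : Finset (Fin n) → ℝ) (hU : ∀ G, U G = f (∑ i ∈ G, r i) (D G))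
    (P : Finset (Finset (Fin n)))
    (hP : (∀ G ∈ P, G.Nonempty) ∧ ∀ i : Fin n, ∃! G, G ∈ P ∧ i ∈ G)
    (hAE : ∀ G ∈ P, ∀ i ∈ G, ∀ G' ∈ P, G' ≠ G →
      U G ≥ U (insert i G') ∨ U G' > U (insert i G')) :
    ∀ G : Finset (Fin n),
      ¬ Relation.TransGen
          (fun A B => A ∈ P ∧ B ∈ P ∧ A ≠ B ∧
            ∃ i ∈ A, x i ∈ convexHull ℝ (x '' ↑B)) G G := by
  refine Relation.not_transGen_self_of_lt U ?_
  rintro A B ⟨hA, hB, hne, i, hiA, hix⟩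
  have hiB : i ∉ B := fun hiB => hne ((hP.2 i).unique ⟨hA, hiA⟩ ⟨hB, hiB⟩)
  have hjoin : U B < U (insert i B) := utility_lt_utility_insert hf1 hU (hr i) hiB (hD B i hix)
  rcases hAE A hA i hiA B hB hne.symm with hstay | hreject
  · exact hjoin.trans_le hstay
  · exact absurd (hjoin.trans hreject) (lt_irrefl _)

/-- For every Acceptance Equilibrium of the geometric group formation game, the
encroachment graph — whose nodes are the groups of the partition, with a directed
edge from `G` to `G'` whenever `G ≠ G'` and some member of `G` lies in the convex
hull of the locations of `G'`'s members — is acyclic (no directed cycle, i.e. the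
transitive closure of the edge relation is irreflexive). -/
theorem stmt8 {n d : ℕ}
    (x : Fin n → EuclideanSpace ℝ (Fin d)) (r : Fin n → ℝ)
    (hr : ∀ i, 0 < r i)
    (D : Finset (Fin n) → ℝ)
    (hD : ∀ (G : Finset (Fin n)) (i : Fin n),
      x i ∈ convexHull ℝ (x '' ↑G) → D (insert i G) = D G)
    (f : ℝ → ℝ → ℝ)
    (hf1 : ∀ c : ℝ, StrictMono fun R => f R c)
    (hf2 : ∀ R : ℝ, StrictAnti (f R))
    (U : Finset (Fin n) → ℝ) (hU : ∀ G, U G = f (∑ i ∈ G, r i) (D G))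
    (P : Finset (Finset (Fin n)))
    (hP : (∀ G ∈ P, G.Nonempty) ∧ ∀ i : Fin n, ∃! G, G ∈ P ∧ i ∈ G)
    (hAE : ∀ G ∈ P, ∀ i ∈ G, ∀ G' ∈ P, G' ≠ G →
      U G ≥ U (insert i G') ∨ U G' > U (insert i G')) :
    ∀ G : Finset (Fin n),
      ¬ Relation.TransGen
          (fun A B => A ∈ P ∧ B ∈ P ∧ A ≠ B ∧
            ∃ i ∈ A, x i ∈ convexHull ℝ (x '' ↑B)) G G :=
  stmt8_general x r hr D hD f hf1 U hU P hP hAE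
end

section
/- Let f(R, D) = g(R)/h(D) where h : ℝ → ℝ_{>0} is increasing and g : ℝ → ℝ_{>0} is increasing with limsup_{R→∞} log(g(R))/R = 0 (sub-exponential). Then for all r, D, δ > 0: limsup_{R→∞} f(R, D)/f(R + r, D + δ) > 1. -/
open Filter

/-!
If the limsup were at most `1`, then, with `c = h (D + δ) / h D > 1`, eventually
`g (R + r) ≥ K * g R` for some `K > 1`, so `g` would grow geometrically along every
progression `R₀ + n r`: along it `log (g R) / R` tends to `log K / r > 0`, contradicting
sub-exponential growth.
-/

lemma pow_mul_le_add_nat_mul_of_mul_le_add {g : ℝ → ℝ} {K r R₀ : ℝ} (hK : 0 ≤ K) (hr : 0 ≤ r)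
    (hstep : ∀ R ≥ R₀, K * g R ≤ g (R + r)) (n : ℕ) :
    K ^ n * g R₀ ≤ g (R₀ + n * r) := by
  induction n with
  | zero => simp
  | succ n ih =>
    calc K ^ (n + 1) * g R₀ = K * (K ^ n * g R₀) := by ring
      _ ≤ K * g (R₀ + n * r) := mul_le_mul_of_nonneg_left ih hK
      _ ≤ g (R₀ + n * r + r) := hstep _ (le_add_of_nonneg_right (by positivity))
      _ = g (R₀ + (n + 1 : ℕ) * r) := by push_cast; ring_nf

lemma eventually_log_div_lt_of_limsup_le_zero {g : ℝ → ℝ}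
    (hsub : limsup (fun R => ((Real.log (g R) / R : ℝ) : EReal)) atTop ≤ 0) {b : ℝ} (hb : 0 < b) :
    ∀ᶠ R in atTop, Real.log (g R) < b * R := by
  have hlt : limsup (fun R => ((Real.log (g R) / R : ℝ) : EReal)) atTop < (b : EReal) :=
    hsub.trans_lt (by exact_mod_cast hb)
  filter_upwards [eventually_lt_of_limsup_lt hlt, eventually_gt_atTop 0] with R hR hR0
  rwa [EReal.coe_lt_coe_iff, div_lt_iff₀ hR0] at hR

lemma frequently_lt_mul_of_limsup_log_div_le_zero {g : ℝ → ℝ} (hg0 : ∀ R, 0 < g R)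
    (hsub : limsup (fun R => ((Real.log (g R) / R : ℝ) : EReal)) atTop ≤ 0)
    {K r : ℝ} (hK : 1 < K) (hr : 0 < r) :
    ∃ᶠ R in atTop, g (R + r) < K * g R := by
  by_contra hcon
  simp only [not_frequently, not_lt] at hcon
  obtain ⟨R₀, hstep⟩ := eventually_atTop.mp hcon
  set a := Real.log K
  set L := Real.log (g R₀)
  have ha : 0 < a := Real.log_pos hK
  have hlower (n : ℕ) : n * a + L ≤ Real.log (g (R₀ + n * r)) := by
    have hpow := pow_mul_le_add_nat_mul_of_mul_le_add (by linarith) hr.le hstep n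
    have hlog := Real.log_le_log (by have := hg0 R₀; positivity) hpow
    rwa [Real.log_mul (by positivity) (hg0 R₀).ne', Real.log_pow] at hlog
  have hprog : Tendsto (fun n : ℕ => R₀ + n * r) atTop atTop :=
    tendsto_atTop_add_const_left _ _ (tendsto_natCast_atTop_atTop.atTop_mul_const hr)
  have hupper := hprog.eventually (eventually_log_div_lt_of_limsup_le_zero hsub
    (div_pos ha (mul_pos two_pos hr)))
  obtain ⟨n, hn, hnbig⟩ :=
    (hupper.and (tendsto_natCast_atTop_atTop.eventually_gt_atTop
      (2 * (a / (2 * r) * R₀ - L) / a))).exists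
  have hlin : a / (2 * r) * (R₀ + n * r) = a / (2 * r) * R₀ + n * a / 2 := by
    field_simp
  rw [div_lt_iff₀ ha] at hnbig
  linarith [hlower n]

theorem stmt10_general (g h : ℝ → ℝ)
    (hg0 : ∀ R, 0 < g R) (hh0 : ∀ c, 0 < h c)
    (hhm : StrictMono h)
    (hsub : limsup (fun R => ((Real.log (g R) / R : ℝ) : EReal)) atTop = 0) :
    ∀ r D δ : ℝ, 0 < r → 0 < D → 0 < δ →
      1 < limsup
          (fun R => (((g R / h D) / (g (R + r) / h (D + δ)) : ℝ) : EReal))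
          atTop := by
  intro r D δ hr _ hδ
  have hc : 1 < h (D + δ) / h D := (one_lt_div (hh0 D)).mpr (hhm (by linarith))
  obtain ⟨K, hK, hKc⟩ := exists_between hc
  have hfreq : ∃ᶠ R in atTop, ((h (D + δ) / h D / K : ℝ) : EReal) ≤
      ((g R / h D) / (g (R + r) / h (D + δ)) : ℝ) := by
    refine (frequently_lt_mul_of_limsup_log_div_le_zero hg0 hsub.le hK hr).mono fun R hR => ?_
    have hratio : (g R / h D) / (g (R + r) / h (D + δ)) = h (D + δ) / h D * g R / g (R + r) := by
      field_simp [hh0 D, hh0 (D + δ), hg0 (R + r)]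
    rw [EReal.coe_le_coe_iff, hratio, div_le_div_iff₀ (by linarith) (hg0 (R + r))]
    calc h (D + δ) / h D * g (R + r) ≤ h (D + δ) / h D * (K * g R) :=
          mul_le_mul_of_nonneg_left hR.le (by linarith)
      _ = h (D + δ) / h D * g R * K := by ring
  exact lt_of_lt_of_le (by exact_mod_cast (one_lt_div (by linarith)).mpr hKc)
    (le_limsup_of_frequently_le hfreq)

/-- Let `f (R, D) = g R / h D` where `h : ℝ → ℝ_{>0}` is (strictly) increasing and
`g : ℝ → ℝ_{>0}` is increasing and sub-exponential, i.e.
`limsup_{R→∞} log (g R) / R = 0`. Then for all `r, D, δ > 0`,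
`limsup_{R→∞} f (R, D) / f (R + r, D + δ) > 1`.
(The limsups are taken in `EReal` so that unbounded functions are handled
correctly.) -/
theorem stmt10 (g h : ℝ → ℝ)
    (hg0 : ∀ R, 0 < g R) (hh0 : ∀ c, 0 < h c)
    (hgm : Monotone g) (hhm : StrictMono h)
    (hsub : limsup (fun R => ((Real.log (g R) / R : ℝ) : EReal)) atTop = 0) :
    ∀ r D δ : ℝ, 0 < r → 0 < D → 0 < δ →
      1 < limsup
          (fun R => (((g R / h D) / (g (R + r) / h (D + δ)) : ℝ) : EReal))
          atTop :=
  stmt10_general g h hg0 hh0 hhm hsub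
end

section
/- If g : ℝ → ℝ_{>0} is increasing and satisfies limsup_{R→∞} log(g(R))/R = 0, then for every r > 0, limsup_{R→∞} g(R)/g(R + r) = 1. -/
/-!
If the limsup of `g R / g (R + r)` were below `1`, then eventually `g R ≤ c * g (R + r)` for
some `c < 1`, so `log g` gains at least `-log c > 0` over every step of length `r`. Being
monotone, `log g` then grows at least linearly with positive slope, so `log g R / R` stays
bounded away from `0`, contradicting sub-exponential growth.
-/

open Filter

lemma add_nat_mul_le_of_step {h : ℝ → ℝ} {R₀ r A : ℝ} (hr : 0 ≤ r)
    (hstep : ∀ R ≥ R₀, h R + A ≤ h (R + r)) (n : ℕ) :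
    h R₀ + n * A ≤ h (R₀ + n * r) := by
  induction n with
  | zero => simp
  | succ n ih =>
    have hR : R₀ ≤ R₀ + n * r := le_add_of_nonneg_right (by positivity)
    calc h R₀ + (n + 1 : ℕ) * A = h R₀ + n * A + A := by push_cast; ring
      _ ≤ h (R₀ + n * r) + A := by linarith
      _ ≤ h (R₀ + n * r + r) := hstep _ hR
      _ = h (R₀ + (n + 1 : ℕ) * r) := by push_cast; ring_nf

lemma Monotone.exists_affine_le_of_step {h : ℝ → ℝ} (hm : Monotone h) {r A : ℝ}
    (hr : 0 < r) (hA : 0 ≤ A) (hstep : ∀ᶠ R in atTop, h R + A ≤ h (R + r)) :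
    ∃ β, ∀ᶠ R in atTop, A / r * R + β ≤ h R := by
  obtain ⟨R₀, hR₀⟩ := eventually_atTop.mp hstep
  refine ⟨h R₀ - A - A / r * R₀, eventually_atTop.mpr ⟨R₀, fun R hR => ?_⟩⟩
  set n := ⌊(R - R₀) / r⌋₊
  have hn_le : R₀ + n * r ≤ R := by
    have := Nat.floor_le (div_nonneg (sub_nonneg.mpr hR) hr.le)
    rw [le_div_iff₀ hr] at this
    linarith
  have hn_gt : (R - R₀) / r - 1 < n := by linarith [Nat.lt_floor_add_one ((R - R₀) / r)]
  calc A / r * R + (h R₀ - A - A / r * R₀) = h R₀ + ((R - R₀) / r - 1) * A := by ring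
    _ ≤ h R₀ + n * A := by gcongr
    _ ≤ h (R₀ + n * r) := add_nat_mul_le_of_step hr.le hR₀ n
    _ ≤ h R := hm hn_le

lemma zero_lt_limsup_div_self_of_affine_le {h : ℝ → ℝ} {α β : ℝ} (hα : 0 < α)
    (hh : ∀ᶠ R in atTop, α * R + β ≤ h R) :
    0 < limsup (fun R => ((h R / R : ℝ) : EReal)) atTop := by
  have hlim : Tendsto (fun R : ℝ => α + β / R) atTop (nhds α) := by
    simpa using (tendsto_const_nhds (x := α)).add
      ((tendsto_const_nhds (x := β)).div_atTop tendsto_id)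
  have hev : ∀ᶠ R in atTop, α / 2 ≤ h R / R := by
    filter_upwards [hlim.eventually (eventually_gt_nhds (half_lt_self hα : α / 2 < α)), hh,
      eventually_gt_atTop 0] with R hR hhR hpos
    calc α / 2 ≤ α + β / R := hR.le
      _ = (α * R + β) / R := by field_simp
      _ ≤ h R / R := by gcongr
  calc (0 : EReal) < ((α / 2 : ℝ) : EReal) := by exact_mod_cast half_pos hα
    _ ≤ _ := le_limsup_of_frequently_le
      (hev.mono fun R hR => EReal.coe_le_coe_iff.mpr hR).frequently (by isBoundedDefault)

lemma limsup_div_shift_le_one {g : ℝ → ℝ} (hg0 : ∀ R, 0 < g R) (hgm : Monotone g) {r : ℝ}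
    (hr : 0 ≤ r) : limsup (fun R => ((g R / g (R + r) : ℝ) : EReal)) atTop ≤ 1 := by
  refine limsup_le_of_le (by isBoundedDefault) (Eventually.of_forall fun R => ?_)
  have : g R / g (R + r) ≤ 1 := (div_le_one (hg0 _)).mpr (hgm (le_add_of_nonneg_right hr))
  exact_mod_cast this

/-- If `g : ℝ → ℝ_{>0}` is increasing and sub-exponential, i.e.
`limsup_{R→∞} log (g R) / R = 0`, then for every `r > 0`,
`limsup_{R→∞} g R / g (R + r) = 1`. (Limsups taken in `EReal`.) -/
theorem stmt11 (g : ℝ → ℝ)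
    (hg0 : ∀ R, 0 < g R) (hgm : Monotone g)
    (hsub : limsup (fun R => ((Real.log (g R) / R : ℝ) : EReal)) atTop = 0) :
    ∀ r : ℝ, 0 < r →
      limsup (fun R => ((g R / g (R + r) : ℝ) : EReal)) atTop = 1 := by
  intro r hr
  refine le_antisymm (limsup_div_shift_le_one hg0 hgm hr.le) (not_lt.mp fun hlt => ?_)
  obtain ⟨c, hlt_c, hc1⟩ := EReal.lt_iff_exists_real_btwn.mp hlt
  have hratio : ∀ᶠ R in atTop, g R / g (R + r) < c :=
    (eventually_lt_of_limsup_lt hlt_c (by isBoundedDefault)).mono fun R h => by exact_mod_cast h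
  have hc0 : 0 < c := by
    obtain ⟨R, hR⟩ := hratio.exists
    exact (div_pos (hg0 R) (hg0 (R + r))).trans hR
  have hstep : ∀ᶠ R in atTop, Real.log (g R) + -Real.log c ≤ Real.log (g (R + r)) := by
    filter_upwards [hratio] with R hR
    have := Real.log_lt_log (div_pos (hg0 R) (hg0 (R + r))) hR
    rw [Real.log_div (hg0 R).ne' (hg0 (R + r)).ne'] at this
    linarith
  have hA : 0 < -Real.log c := neg_pos.mpr (Real.log_neg hc0 (by exact_mod_cast hc1))
  have hlogm : Monotone fun R => Real.log (g R) := fun a b hab => Real.log_le_log (hg0 a) (hgm hab)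
  obtain ⟨β, hβ⟩ := hlogm.exists_affine_le_of_step hr hA.le hstep
  exact (zero_lt_limsup_div_self_of_affine_le (div_pos hA hr) hβ).ne' hsub
end

section
/- In a one-dimensional geometric group formation game, if group G encroaches on group G' but G' does not encroach on G (i.e., some member of G lies in the convex hull (interval) of G''s locations, but no member of G' lies in the interval of G's locations), and both groups are nonempty, then G is nested in G': all members of G are located within the interval spanned by G''s locations. -/
/-! In `ℝ` the territory of a group is `[min, max]` of its locations. The two extreme members
of `G'` lie outside `G`'s interval, yet that interval meets `G'`'s, so they must flank it. -/

open Set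

theorem convexHull_image_finset_eq_Icc {ι 𝕜 : Type*} [Field 𝕜] [LinearOrder 𝕜]
    [IsStrictOrderedRing 𝕜] (f : ι → 𝕜) {s : Finset ι} (hs : s.Nonempty) :
    convexHull 𝕜 (f '' s) = Icc (s.inf' hs f) (s.sup' hs f) := by
  apply le_antisymm
  · refine convexHull_min ?_ (convex_Icc _ _)
    rintro _ ⟨i, hi, rfl⟩
    exact ⟨s.inf'_le f hi, s.le_sup' f hi⟩
  · obtain ⟨a, ha, hae⟩ := s.exists_mem_eq_inf' hs f
    obtain ⟨b, hb, hbe⟩ := s.exists_mem_eq_sup' hs f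
    have hab : f a ≤ f b := hae ▸ hbe ▸ (s.inf'_le f ha).trans (s.le_sup' f ha)
    rw [hae, hbe, ← segment_eq_Icc hab]
    exact segment_subset_convexHull (mem_image_of_mem f ha) (mem_image_of_mem f hb)

theorem Set.Icc_subset_Icc_of_mem_of_notMem {α : Type*} [LinearOrder α] {a b a' b' c : α}
    (hc : c ∈ Icc a b) (hc' : c ∈ Icc a' b') (ha' : a' ∉ Icc a b) (hb' : b' ∉ Icc a b) :
    Icc a b ⊆ Icc a' b' := by
  have ha : a' ≤ a := by
    by_contra! h
    exact ha' ⟨h.le, hc'.1.trans hc.2⟩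
  have hb : b ≤ b' := by
    by_contra! h
    exact hb' ⟨hc.1.trans hc'.2, h.le⟩
  exact Icc_subset_Icc ha hb

/-- One-dimensional geometric group formation game: the territory of a group is the
convex hull (the closed interval spanned) of its members' locations in `ℝ`. If the
nonempty group `G` encroaches on the nonempty group `G'` (some member of `G` lies in
`G'`'s territory) but `G'` does not encroach on `G`, then `G` is nested in `G'`:
every member of `G` lies in `G'`'s territory. -/
theorem stmt15 {n : ℕ} (x : Fin n → ℝ) (G G' : Finset (Fin n))
    (hG : G.Nonempty) (hG' : G'.Nonempty)
    (henc : ∃ i ∈ G, x i ∈ convexHull ℝ (x '' ↑G'))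
    (hnotenc : ¬ ∃ j ∈ G', x j ∈ convexHull ℝ (x '' ↑G)) :
    ∀ i ∈ G, x i ∈ convexHull ℝ (x '' ↑G') := by
  rw [convexHull_image_finset_eq_Icc x hG'] at henc ⊢
  rw [convexHull_image_finset_eq_Icc x hG] at hnotenc
  obtain ⟨i₀, hi₀, hx⟩ := henc
  obtain ⟨a, ha, hae⟩ := G'.exists_mem_eq_inf' hG' x
  obtain ⟨b, hb, hbe⟩ := G'.exists_mem_eq_sup' hG' x
  have hnested := Icc_subset_Icc_of_mem_of_notMem (c := x i₀)
    ⟨G.inf'_le x hi₀, G.le_sup' x hi₀⟩ hx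
    (hae ▸ fun h ↦ hnotenc ⟨a, ha, h⟩) (hbe ▸ fun h ↦ hnotenc ⟨b, hb, h⟩)
  exact fun i hi ↦ hnested ⟨G.inf'_le x hi, G.le_sup' x hi⟩
end

section
/- For the three-agent instance on the line (x = (0, 0.6, 1.2), r = (2, 1, 2), U_G = R_G/(1 + diam)), none of the three partitions of {1,2,3} into exactly two nonempty groups is an Acceptance Equilibrium. -/
/-!
In each of the three partitions the pair contains an agent of resource `2`, and the pair's
utility (`3 / 1.6` or `4 / 2.2`) is below `2`, so that agent prefers to stand alone.
-/

/-- Locations of the three agents on the line. -/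
noncomputable def xloc : Fin 3 → ℝ := ![0, 0.6, 1.2]

/-- Resources of the three agents. -/
noncomputable def res : Fin 3 → ℝ := ![2, 1, 2]

/-- Group utility `U G = (∑_{i∈G} r_i) / (1 + max_{i,j∈G} |x_i − x_j|)`. -/
noncomputable def util (G : Finset (Fin 3)) : ℝ :=
  (∑ i ∈ G, res i) / (1 + Metric.diam (xloc '' ↑G))

/-- `P` is an Acceptance Equilibrium: a partition such that for every agent `i` in
a group `G ∈ P` and every other group `G'` (including the empty group, with
`U ∅ = -∞`, which yields the condition `U G ≥ U {i}`), either
`U G ≥ U (G' ∪ {i})` or `U G' > U (G' ∪ {i})`. -/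
def IsAE (P : Finset (Finset (Fin 3))) : Prop :=
  ((∀ G ∈ P, G.Nonempty) ∧ ∀ i : Fin 3, ∃! G, G ∈ P ∧ i ∈ G) ∧
  ∀ G ∈ P, ∀ i ∈ G,
    util G ≥ util {i} ∧
    ∀ G' ∈ P, G' ≠ G → (util G ≥ util (insert i G') ∨ util G' > util (insert i G'))

lemma util_singleton (i : Fin 3) : util {i} = res i := by
  simp [util]

lemma util_pair {i j : Fin 3} (h : i ≠ j) :
    util {i, j} = (res i + res j) / (1 + dist (xloc i) (xloc j)) := by
  simp [util, Finset.sum_pair h, Set.image_insert_eq, Metric.diam_pair]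

lemma not_isAE_of_util_lt_util_singleton {P : Finset (Finset (Fin 3))} {G : Finset (Fin 3)}
    (hG : G ∈ P) {i : Fin 3} (hi : i ∈ G) (h : util G < util {i}) : ¬ IsAE P :=
  fun hP => (hP.2 G hG i hi).1.not_gt h

/-- For the three-agent instance with locations `0, 0.6, 1.2` and resources
`2, 1, 2`, none of the three partitions of `{1,2,3}` into exactly two nonempty
groups is an Acceptance Equilibrium. -/
theorem stmt17 :
    ¬ IsAE {({0, 1} : Finset (Fin 3)), {2}} ∧
    ¬ IsAE {({0, 2} : Finset (Fin 3)), {1}} ∧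
    ¬ IsAE {({1, 2} : Finset (Fin 3)), {0}} := by
  refine ⟨not_isAE_of_util_lt_util_singleton (G := {0, 1}) (i := 0) (by simp) (by simp) ?_,
    not_isAE_of_util_lt_util_singleton (G := {0, 2}) (i := 0) (by simp) (by simp) ?_,
    not_isAE_of_util_lt_util_singleton (G := {1, 2}) (i := 2) (by simp) (by simp) ?_⟩
  all_goals
    rw [util_singleton, util_pair (by decide)]
    simp only [xloc, res, Real.dist_eq, Matrix.cons_val_zero, Matrix.cons_val_one, Matrix.cons_val]
    norm_num [abs_of_neg]
end

section
/- Suppose groups G_1, ..., G_m all have the same coverage D_G, sizes n_1 > n_2 > ... > n_m, and per-member resources r_1 ≥ r_2 ≥ ... ≥ r_m > 0 (each member of G_k has resource r_k), and f : ℝ×ℝ → ℝ is increasing in its first argument and decreasing in its second. If for all k < m, f(r_k n_k + r_{k+1}, D_G + δ) < f(r_k n_k, D_G), then for all k < k' ≤ m: f(r_{k'} n_{k'} + r_k, D_G + δ) < f(r_k n_k, D_G). -/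
theorem mul_natCast_add_le_mul_natCast {α : Type*} [Semiring α] [PartialOrder α]
    [IsOrderedRing α] {a b : α} {p q : ℕ} (hba : b ≤ a) (ha : 0 ≤ a) (hpq : p < q) :
    b * p + a ≤ a * q :=
  calc b * p + a ≤ a * p + a := by gcongr
    _ = a * (p + 1 : ℕ) := by rw [Nat.cast_succ, mul_add_one]
    _ ≤ a * q := by gcongr; exact hpq

theorem stmt18_general (m : ℕ) (n : ℕ → ℕ) (r : ℕ → ℝ) (f : ℝ → ℝ → ℝ)
    (Dg δ : ℝ)
    (hn : ∀ k k', k < k' → k' < m → n k' < n k)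
    (hrpos : ∀ k < m, 0 < r k)
    (hrmono : ∀ k k', k ≤ k' → k' < m → r k' ≤ r k)
    (hf1 : ∀ c : ℝ, Monotone fun R => f R c)
    (hstep : ∀ k, k + 1 < m →
      f (r k * n k + r (k + 1)) (Dg + δ) < f (r k * n k) Dg) :
    ∀ k k', k < k' → k' < m →
      f (r k' * n k' + r k) (Dg + δ) < f (r k * n k) Dg := by
  intro k k' hk hk'
  have hkm : k + 1 < m := by omega
  have hle : r k' * n k' + r k ≤ r k * n k + r (k + 1) :=
    (mul_natCast_add_le_mul_natCast (hrmono k k' hk.le hk') (hrpos k (by omega)).le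
      (hn k k' hk hk')).trans (le_add_of_nonneg_right (hrpos (k + 1) hkm).le)
  exact (hf1 _ hle).trans_lt (hstep k hkm)

/-- Groups `G_1, …, G_m` (0-indexed here as `k < m`) all have the same coverage
`Dg`, strictly decreasing sizes `n 0 > n 1 > ⋯ > n (m-1)`, and non-increasing
positive per-member resources `r 0 ≥ r 1 ≥ ⋯ ≥ r (m-1) > 0`; `f` is increasing in
its first argument and decreasing in its second. If the single-step conditions
`f (r k * n k + r (k+1)) (Dg + δ) < f (r k * n k) Dg` hold for all `k` with
`k + 1 < m`, then for all `k < k' < m`: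
`f (r k' * n k' + r k) (Dg + δ) < f (r k * n k) Dg`. -/
theorem stmt18 (m : ℕ) (n : ℕ → ℕ) (r : ℕ → ℝ) (f : ℝ → ℝ → ℝ)
    (Dg δ : ℝ) (hDg : 0 < Dg) (hδ : 0 < δ)
    (hn : ∀ k k', k < k' → k' < m → n k' < n k)
    (hrpos : ∀ k < m, 0 < r k)
    (hrmono : ∀ k k', k ≤ k' → k' < m → r k' ≤ r k)
    (hf1 : ∀ c : ℝ, Monotone fun R => f R c)
    (hf2 : ∀ R : ℝ, Antitone (f R))
    (hstep : ∀ k, k + 1 < m →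
      f (r k * n k + r (k + 1)) (Dg + δ) < f (r k * n k) Dg) :
    ∀ k k', k < k' → k' < m →
      f (r k' * n k' + r k) (Dg + δ) < f (r k * n k) Dg :=
  stmt18_general m n r f Dg δ hn hrpos hrmono hf1 hstep
end
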